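/- Fix an integer p ≥ 2 and f ∈ 𝓕, and let (κ_n) be a positive real sequence diverging to ∞. Then (κ_n φ_f(κ_n))² · m₄(κ_n) → p² − 1 as n → ∞; equivalently, m₄(κ_n) = (p²−1)/(κ_nφ_f(κ_n))² + o(1/(κ_nφ_f(κ_n))²). -/

import Mathlib

open MeasureTheory Filter Asymptotics Real Set


lemma rpow_le_rpow_abs' {x B ξ : ℝ} (h1 : 1 ≤ x) (h2 : x ≤ B) : x ^ ξ ≤ B ^ |ξ| := by
  have hB : 1 ≤ B := le_trans h1 h2
  rcases le_or_gt 0 ξ with h | h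
  · rw [abs_of_nonneg h]
    exact Real.rpow_le_rpow (by linarith) h2 h
  · calc x ^ ξ ≤ 1 := Real.rpow_le_one_of_one_le_of_nonpos h1 h.le
      _ ≤ B ^ |ξ| := Real.one_le_rpow hB (abs_nonneg ξ)

lemma weight_measurable (ξ ζ : ℝ) :
    Measurable (fun s : ℝ => (1 - s) ^ ξ * (1 + s) ^ ζ) :=
  ((measurable_const.sub measurable_id).pow_const _).mul
    ((measurable_const.add measurable_id).pow_const _)

lemma weight_nonneg {ξ ζ s : ℝ} (h1 : -1 ≤ s) (h2 : s ≤ 1) :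
    0 ≤ (1 - s) ^ ξ * (1 + s) ^ ζ :=
  mul_nonneg (Real.rpow_nonneg (by linarith) _) (Real.rpow_nonneg (by linarith) _)

/-- The weight `(1-s)^ξ (1+s)^ζ` is interval integrable on `[-1,1]`. -/
lemma weight_integrable {ξ ζ : ℝ} (hξ : -1 < ξ) (hζ : -1 < ζ) :
    IntervalIntegrable (fun s : ℝ => (1 - s) ^ ξ * (1 + s) ^ ζ) volume (-1) 1 := by
  have hmeas := weight_measurable ξ ζ
  have h1 : IntervalIntegrable (fun s : ℝ => (1 - s) ^ ξ * (1 + s) ^ ζ) volume (-1) 0 := by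
    have hshift : IntervalIntegrable (fun s : ℝ => (1 + s) ^ ζ) volume (-1) 0 := by
      simpa using (intervalIntegral.intervalIntegrable_rpow' (a := 0) (b := 1) hζ).comp_add_left 1
    refine (hshift.const_mul ((2:ℝ) ^ |ξ|)).mono_fun' hmeas.aestronglyMeasurable ?_
    filter_upwards [ae_restrict_mem measurableSet_uIoc] with s hs
    have hs' : s ∈ Set.Ioc (-1:ℝ) 0 := by
      simpa [Set.uIoc_of_le (by norm_num : (-1:ℝ) ≤ 0)] using hs
    have hsl : -1 < s := hs'.1
    have hsu : s ≤ 0 := hs'.2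
    have h1s : 0 ≤ (1 + s) ^ ζ := Real.rpow_nonneg (by linarith) _
    have hb : (1 - s) ^ ξ ≤ 2 ^ |ξ| := rpow_le_rpow_abs' (by linarith) (by linarith)
    rw [Real.norm_eq_abs, abs_of_nonneg (weight_nonneg hsl.le (by linarith))]
    exact mul_le_mul_of_nonneg_right hb h1s
  have h2 : IntervalIntegrable (fun s : ℝ => (1 - s) ^ ξ * (1 + s) ^ ζ) volume 0 1 := by
    have hshift : IntervalIntegrable (fun s : ℝ => (1 - s) ^ ξ) volume 0 1 := by
      simpa using ((intervalIntegral.intervalIntegrable_rpow' (a := 0) (b := 1) hξ).comp_sub_left 1).symm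
    refine (hshift.mul_const ((2:ℝ) ^ |ζ|)).mono_fun' hmeas.aestronglyMeasurable ?_
    filter_upwards [ae_restrict_mem measurableSet_uIoc] with s hs
    have hs' : s ∈ Set.Ioc (0:ℝ) 1 := by
      simpa [Set.uIoc_of_le (by norm_num : (0:ℝ) ≤ 1)] using hs
    have hsl : 0 < s := hs'.1
    have hsu : s ≤ 1 := hs'.2
    have h1s : 0 ≤ (1 - s) ^ ξ := Real.rpow_nonneg (by linarith) _
    have hb : (1 + s) ^ ζ ≤ 2 ^ |ζ| := rpow_le_rpow_abs' (by linarith) (by linarith)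
    rw [Real.norm_eq_abs, abs_of_nonneg (weight_nonneg (by linarith) hsu)]
    exact mul_le_mul_of_nonneg_left hb h1s
  exact h1.trans h2


/-- Change of variables `u = (1-s)T`. -/
lemma cov_identity {ξ ζ T : ℝ} (hT : 0 < T) :
    (∫ u in (0:ℝ)..2*T, u ^ ξ * (2 - u / T) ^ ζ * Real.exp (-u)) =
      T ^ (ξ+1) * ∫ s in (-1:ℝ)..1, (1 - s) ^ ξ * (1 + s) ^ ζ * Real.exp ((s - 1) * T) := by
  have hT' : T ≠ 0 := hT.ne'
  have e1 : (∫ u in (0:ℝ)..2*T, u ^ ξ * (2 - u / T) ^ ζ * Real.exp (-u)) =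
      ∫ u in (0:ℝ)..2*T,
        (fun v => (T * v) ^ ξ * (2 - v) ^ ζ * Real.exp (-(T * v))) (u / T) := by
    refine intervalIntegral.integral_congr fun u _ => ?_
    simp only
    rw [mul_div_cancel₀ _ hT']
  rw [e1, intervalIntegral.integral_comp_div (c := T)
    (fun v => (T * v) ^ ξ * (2 - v) ^ ζ * Real.exp (-(T * v))) hT']
  rw [show (0:ℝ)/T = 0 by simp, show 2*T/T = 2 by field_simp]
  have e2 : (∫ v in (0:ℝ)..2, (T * v) ^ ξ * (2 - v) ^ ζ * Real.exp (-(T * v))) =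
      ∫ v in (0:ℝ)..2,
        (fun s => (T * (1 - s)) ^ ξ * (1 + s) ^ ζ * Real.exp ((s - 1) * T)) (1 - v) := by
    refine intervalIntegral.integral_congr fun v _ => ?_
    simp only
    have h1 : (1:ℝ) - (1 - v) = v := by ring
    have h2 : (1:ℝ) + (1 - v) = 2 - v := by ring
    have h3 : ((1 - v) - 1) * T = -(T * v) := by ring
    rw [h1, h2, h3]
  rw [e2, intervalIntegral.integral_comp_sub_left
    (fun s => (T * (1 - s)) ^ ξ * (1 + s) ^ ζ * Real.exp ((s - 1) * T)) 1]
  norm_num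
  have e3 : (∫ s in (-1:ℝ)..1, (T * (1 - s)) ^ ξ * (1 + s) ^ ζ * Real.exp ((s - 1) * T)) =
      ∫ s in (-1:ℝ)..1, T ^ ξ * ((1 - s) ^ ξ * (1 + s) ^ ζ * Real.exp ((s - 1) * T)) := by
    refine intervalIntegral.integral_congr fun s hs => ?_
    rw [Set.uIcc_of_le (by norm_num : (-1:ℝ) ≤ 1)] at hs
    have h1s : (0:ℝ) ≤ 1 - s := by linarith [hs.2]
    rw [Real.mul_rpow hT.le h1s]
    ring
  rw [e3, intervalIntegral.integral_const_mul]
  rw [Real.rpow_add_one hT' ξ]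
  ring


lemma hfun_meas (ξ ζ T : ℝ) :
    Measurable (fun u : ℝ => u ^ ξ * (2 - u / T) ^ ζ * Real.exp (-u)) :=
  (((measurable_id.pow_const _).mul
    ((measurable_const.sub (measurable_id.div_const T)).pow_const _)).mul
    (Real.measurable_exp.comp measurable_neg))

lemma hfun_nonneg {ξ ζ T u : ℝ} (hu : 0 ≤ u) (hu2 : u ≤ 2*T) (hT : 0 < T) :
    0 ≤ u ^ ξ * (2 - u / T) ^ ζ * Real.exp (-u) := by
  have : 0 ≤ 2 - u / T := by
    rw [sub_nonneg]
    rw [div_le_iff₀ hT]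
    linarith
  positivity

lemma hfun_int_left {ξ ζ T : ℝ} (hξ : -1 < ξ) (hT : 0 < T) :
    IntervalIntegrable (fun u : ℝ => u ^ ξ * (2 - u / T) ^ ζ * Real.exp (-u)) volume 0 T := by
  refine ((intervalIntegral.intervalIntegrable_rpow' hξ).mul_const
    ((2:ℝ) ^ |ζ|)).mono_fun' (hfun_meas ξ ζ T).aestronglyMeasurable ?_
  filter_upwards [ae_restrict_mem measurableSet_uIoc] with u hu
  rw [Set.uIoc_of_le hT.le] at hu
  have hu0 : 0 < u := hu.1
  have huT : u ≤ T := hu.2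
  have hdiv0 : 0 ≤ u / T := by positivity
  have hdiv1 : u / T ≤ 1 := (div_le_one hT).2 huT
  have hb : (2 - u / T) ^ ζ ≤ 2 ^ |ζ| := rpow_le_rpow_abs' (by linarith) (by linarith)
  have hb0 : 0 ≤ (2 - u / T) ^ ζ := Real.rpow_nonneg (by linarith) _
  have hexp : Real.exp (-u) ≤ 1 := Real.exp_le_one_iff.2 (by linarith)
  rw [Real.norm_eq_abs, abs_of_nonneg (hfun_nonneg hu0.le (by linarith) hT)]
  calc u ^ ξ * (2 - u / T) ^ ζ * Real.exp (-u)
      ≤ u ^ ξ * (2 - u / T) ^ ζ * 1 :=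
        mul_le_mul_of_nonneg_left hexp (by positivity)
    _ = u ^ ξ * (2 - u / T) ^ ζ := by ring
    _ ≤ u ^ ξ * 2 ^ |ζ| :=
        mul_le_mul_of_nonneg_left hb (Real.rpow_nonneg hu0.le _)

lemma base_int_right {ζ T : ℝ} (hζ : -1 < ζ) (hT : 0 < T) :
    IntervalIntegrable (fun u : ℝ => (2 - u / T) ^ ζ) volume T (2*T) := by
  have h := ((intervalIntegral.intervalIntegrable_rpow' (a := 0) (b := 1) hζ).comp_sub_left
    2).comp_mul_right (c := T⁻¹)
  have hT' : T ≠ 0 := hT.ne'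
  simp only [div_eq_mul_inv] at h ⊢
  norm_num at h
  exact h.symm

lemma hfun_int_right {ξ ζ T : ℝ} (hζ : -1 < ζ) (hT1 : 1 ≤ T) :
    IntervalIntegrable (fun u : ℝ => u ^ ξ * (2 - u / T) ^ ζ * Real.exp (-u))
      volume T (2*T) := by
  have hT : 0 < T := lt_of_lt_of_le one_pos hT1
  refine ((base_int_right hζ hT).const_mul ((2*T) ^ |ξ|)).mono_fun'
    (hfun_meas ξ ζ T).aestronglyMeasurable ?_
  filter_upwards [ae_restrict_mem measurableSet_uIoc] with u hu
  rw [Set.uIoc_of_le (by linarith)] at hu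
  have hu1 : 1 ≤ u := le_trans hT1 hu.1.le
  have hu2 : u ≤ 2*T := hu.2
  have hb : u ^ ξ ≤ (2*T) ^ |ξ| := rpow_le_rpow_abs' hu1 hu2
  have hb0 : 0 ≤ (2 - u / T) ^ ζ := by
    apply Real.rpow_nonneg
    rw [sub_nonneg, div_le_iff₀ hT]; linarith
  have hexp : Real.exp (-u) ≤ 1 := Real.exp_le_one_iff.2 (by linarith)
  rw [Real.norm_eq_abs, abs_of_nonneg (hfun_nonneg (by linarith) hu2 hT)]
  calc u ^ ξ * (2 - u / T) ^ ζ * Real.exp (-u)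
      ≤ u ^ ξ * (2 - u / T) ^ ζ * 1 := mul_le_mul_of_nonneg_left hexp (by positivity)
    _ = u ^ ξ * (2 - u / T) ^ ζ := by ring
    _ ≤ (2*T) ^ |ξ| * (2 - u / T) ^ ζ := mul_le_mul_of_nonneg_right hb hb0
lemma tail_integral_value {ζ T : ℝ} (hζ : -1 < ζ) (hT : 0 < T) :
    (∫ u in T..2*T, (2 - u / T) ^ ζ) = T * (ζ+1)⁻¹ := by
  have hT' : T ≠ 0 := hT.ne'
  have e1 : (∫ u in T..2*T, (2 - u / T) ^ ζ) =
      ∫ u in T..2*T, (fun x => (2 - x) ^ ζ) (u / T) := rfl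
  rw [e1, intervalIntegral.integral_comp_div (fun x => (2 - x) ^ ζ) hT']
  rw [show T/T = 1 by field_simp, show 2*T/T = 2 by field_simp]
  rw [intervalIntegral.integral_comp_sub_left (fun y => y ^ ζ) 2]
  norm_num
  left
  rw [integral_rpow (Or.inl hζ)]
  rw [Real.one_rpow, Real.zero_rpow (by linarith : ζ + 1 ≠ 0)]
  norm_num

lemma tail_bound {ξ ζ T : ℝ} (hζ : -1 < ζ) (hT1 : 1 ≤ T) :
    (∫ u in T..2*T, u ^ ξ * (2 - u / T) ^ ζ * Real.exp (-u)) ≤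
      (2*T) ^ |ξ| * Real.exp (-T) * (T * (ζ+1)⁻¹) := by
  have hT : 0 < T := lt_of_lt_of_le one_pos hT1
  have key : (∫ u in T..2*T, u ^ ξ * (2 - u / T) ^ ζ * Real.exp (-u)) ≤
      ∫ u in T..2*T, ((2*T) ^ |ξ| * Real.exp (-T)) * (2 - u / T) ^ ζ := by
    refine intervalIntegral.integral_mono_on (by linarith) (hfun_int_right hζ hT1)
      ((base_int_right hζ hT).const_mul _) fun u hu => ?_
    have hu1 : 1 ≤ u := le_trans hT1 hu.1
    have hu2 : u ≤ 2*T := hu.2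
    have hb : u ^ ξ ≤ (2*T) ^ |ξ| := rpow_le_rpow_abs' hu1 hu2
    have hb0 : 0 ≤ (2 - u / T) ^ ζ := by
      apply Real.rpow_nonneg
      rw [sub_nonneg, div_le_iff₀ hT]; linarith
    have hexp : Real.exp (-u) ≤ Real.exp (-T) := Real.exp_le_exp.2 (by linarith [hu.1])
    calc u ^ ξ * (2 - u / T) ^ ζ * Real.exp (-u)
        ≤ (2*T) ^ |ξ| * (2 - u / T) ^ ζ * Real.exp (-u) :=
          mul_le_mul_of_nonneg_right (mul_le_mul_of_nonneg_right hb hb0) (Real.exp_pos _).le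
      _ ≤ (2*T) ^ |ξ| * (2 - u / T) ^ ζ * Real.exp (-T) :=
          mul_le_mul_of_nonneg_left hexp (by positivity)
      _ = ((2*T) ^ |ξ| * Real.exp (-T)) * (2 - u / T) ^ ζ := by ring
  rw [intervalIntegral.integral_const_mul, tail_integral_value hζ hT] at key
  linarith [key]

lemma tail_tendsto_zero {ξ ζ : ℝ} (hζ : -1 < ζ) {t : ℕ → ℝ} (ht : Tendsto t atTop atTop) :
    Tendsto (fun n => ∫ u in (t n)..2*(t n),
      u ^ ξ * (2 - u / t n) ^ ζ * Real.exp (-u)) atTop (nhds 0) := by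
  have hbig : Tendsto (fun T : ℝ => (2*T) ^ |ξ| * Real.exp (-T) * (T * (ζ+1)⁻¹))
      atTop (nhds 0) := by
    have h0 : Tendsto (fun T : ℝ => 2 ^ |ξ| * (ζ+1)⁻¹ * (T ^ (|ξ|+1) * Real.exp (-1*T)))
        atTop (nhds 0) := by
      have := tendsto_rpow_mul_exp_neg_mul_atTop_nhds_zero (|ξ|+1) 1 one_pos
      simpa using (this.const_mul (2 ^ |ξ| * (ζ+1)⁻¹))
    refine h0.congr' ?_
    filter_upwards [eventually_gt_atTop (0:ℝ)] with T hT
    rw [Real.mul_rpow (by norm_num) hT.le, Real.rpow_add hT, Real.rpow_one]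
    ring_nf
  have hcomp := hbig.comp ht
  refine squeeze_zero_norm' ?_ hcomp
  filter_upwards [ht.eventually_ge_atTop 1] with n hn
  have hT : 0 < t n := lt_of_lt_of_le one_pos hn
  have hnn : 0 ≤ ∫ u in (t n)..2*(t n), u ^ ξ * (2 - u / t n) ^ ζ * Real.exp (-u) := by
    apply intervalIntegral.integral_nonneg (by linarith)
    intro u hu
    exact hfun_nonneg (le_trans hT.le hu.1) hu.2 hT
  rw [Real.norm_eq_abs, abs_of_nonneg hnn]
  exact tail_bound hζ hn
lemma main_dct {ξ ζ : ℝ} (hξ : -1 < ξ) (hζ : -1 < ζ) {t : ℕ → ℝ}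
    (ht : Tendsto t atTop atTop) :
    Tendsto (fun n => ∫ u in (0:ℝ)..(t n), u ^ ξ * (2 - u / t n) ^ ζ * Real.exp (-u))
      atTop (nhds (2 ^ ζ * Real.Gamma (ξ+1))) := by
  have hξ1 : (0:ℝ) < ξ + 1 := by linarith
  set μ : Measure ℝ := volume.restrict (Ioi 0) with hμ
  set F : ℕ → ℝ → ℝ := fun n => Set.indicator (Set.Ioc (0:ℝ) (t n))
    (fun u => u ^ ξ * (2 - u / t n) ^ ζ * Real.exp (-u)) with hF
  set flim : ℝ → ℝ := fun u => 2 ^ ζ * (Real.exp (-u) * u ^ ξ) with hflim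
  have hbound_int : Integrable (fun u => 2 ^ |ζ| * (Real.exp (-u) * u ^ ξ)) μ := by
    have h := Real.GammaIntegral_convergent hξ1
    simp only [add_sub_cancel_right] at h
    exact h.const_mul _
  have key : Tendsto (fun n => ∫ u, F n u ∂μ) atTop (nhds (∫ u, flim u ∂μ)) := by
    refine tendsto_integral_of_dominated_convergence
      (fun u => 2 ^ |ζ| * (Real.exp (-u) * u ^ ξ)) ?_ hbound_int ?_ ?_
    · intro n
      exact ((hfun_meas ξ ζ (t n)).indicator measurableSet_Ioc).aestronglyMeasurable
    · intro n
      filter_upwards [ae_restrict_mem measurableSet_Ioi] with u hu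
      by_cases hmem : u ∈ Set.Ioc (0:ℝ) (t n)
      · rw [hF]
        simp only [Set.indicator_of_mem hmem]
        have hu0 : 0 < u := hmem.1
        have hT : 0 < t n := lt_of_lt_of_le hu0 hmem.2
        have hdiv1 : u / t n ≤ 1 := (div_le_one hT).2 hmem.2
        have hdiv0 : 0 ≤ u / t n := by positivity
        have hb : (2 - u / t n) ^ ζ ≤ 2 ^ |ζ| := rpow_le_rpow_abs' (by linarith) (by linarith)
        rw [Real.norm_eq_abs, abs_of_nonneg (hfun_nonneg hu0.le (by
          rw [← div_le_iff₀ hT] at *; linarith) hT)]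
        calc u ^ ξ * (2 - u / t n) ^ ζ * Real.exp (-u)
            ≤ u ^ ξ * 2 ^ |ζ| * Real.exp (-u) :=
              mul_le_mul_of_nonneg_right (mul_le_mul_of_nonneg_left hb
                (Real.rpow_nonneg hu0.le _)) (Real.exp_pos _).le
          _ = 2 ^ |ζ| * (Real.exp (-u) * u ^ ξ) := by ring
      · rw [hF]
        simp only [Set.indicator_of_notMem hmem]
        have hu0 : (0:ℝ) < u := hu
        rw [norm_zero]
        positivity
    · filter_upwards [ae_restrict_mem measurableSet_Ioi] with u hu
      have hu0 : (0:ℝ) < u := hu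
      have hdiv : Tendsto (fun n => u / t n) atTop (nhds 0) :=
        Tendsto.div_atTop tendsto_const_nhds ht
      have h2 : Tendsto (fun n => 2 - u / t n) atTop (nhds 2) := by
        simpa using tendsto_const_nhds.sub hdiv
      have hr : Tendsto (fun n => (2 - u / t n) ^ ζ) atTop (nhds (2 ^ ζ)) :=
        ((Real.continuousAt_rpow_const 2 ζ (Or.inl two_ne_zero)).tendsto).comp h2
      have hprod : Tendsto (fun n => u ^ ξ * (2 - u / t n) ^ ζ * Real.exp (-u))
          atTop (nhds (flim u)) := by
        have hc1 : Tendsto (fun _ : ℕ => u ^ ξ) atTop (nhds (u ^ ξ)) := tendsto_const_nhds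
        have hc2 : Tendsto (fun _ : ℕ => Real.exp (-u)) atTop (nhds (Real.exp (-u))) :=
          tendsto_const_nhds
        have := (hc1.mul hr).mul hc2
        convert this using 1
        rw [hflim]; ring
      refine hprod.congr' ?_
      filter_upwards [ht.eventually_ge_atTop u] with n hn
      rw [hF]
      simp only [Set.indicator_of_mem (Set.mem_Ioc.2 ⟨hu0, hn⟩)]
  have hval : (∫ u, flim u ∂μ) = 2 ^ ζ * Real.Gamma (ξ+1) := by
    rw [Real.Gamma_eq_integral hξ1]
    simp only [add_sub_cancel_right]
    rw [hflim, hμ]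
    rw [MeasureTheory.integral_const_mul]
  rw [hval] at key
  refine key.congr' ?_
  filter_upwards [ht.eventually_gt_atTop 0] with n hn
  rw [hF, hμ]
  rw [MeasureTheory.integral_indicator measurableSet_Ioc]
  rw [Measure.restrict_restrict measurableSet_Ioc]
  rw [Set.inter_eq_self_of_subset_left Set.Ioc_subset_Ioi_self]
  rw [intervalIntegral.integral_of_le hn.le]
lemma exp_weight_limit {ξ ζ : ℝ} (hξ : -1 < ξ) (hζ : -1 < ζ) {t : ℕ → ℝ}
    (ht : Tendsto t atTop atTop) :
    Tendsto (fun n => (t n) ^ (ξ+1) *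
        ∫ s in (-1:ℝ)..1, (1 - s) ^ ξ * (1 + s) ^ ζ * Real.exp ((s - 1) * t n))
      atTop (nhds (2 ^ ζ * Real.Gamma (ξ+1))) := by
  have hsum := (main_dct hξ hζ ht).add (tail_tendsto_zero (ξ := ξ) hζ ht)
  rw [add_zero] at hsum
  refine hsum.congr' ?_
  filter_upwards [ht.eventually_ge_atTop 1] with n hn
  have hT : 0 < t n := lt_of_lt_of_le one_pos hn
  rw [intervalIntegral.integral_add_adjacent_intervals (hfun_int_left hξ hT)
    (hfun_int_right hζ hn)]
  exact cov_identity hT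
/-- Logarithmic derivative `φ_f = f'/f`. -/
noncomputable def phiF (f : ℝ → ℝ) (κ : ℝ) : ℝ := deriv f κ / f κ

/-- Membership in the class `𝓕` of angular functions. -/
structure MemF (f : ℝ → ℝ) : Prop where
  pos : ∀ x, 0 < f x
  monoNonpos : MonotoneOn f (Set.Iic (0:ℝ))
  strictMonoNonneg : StrictMonoOn f (Set.Ici (0:ℝ))
  diff : ∃ M > (0:ℝ), ∀ x ∈ Set.Ioi M, DifferentiableAt ℝ f x
  tendsto_top : Tendsto (fun κ => κ * phiF f κ) atTop atTop
  monoOn : ∃ M' > (0:ℝ), MonotoneOn (fun κ => κ * phiF f κ) (Set.Ioi M')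
  littleO : ∀ ξ ζ : ℝ, -1 < ξ → -1 < ζ →
    (fun κ => ∫ s in (-1:ℝ)..1, (1 - s) ^ ξ * (1 + s) ^ ζ *
        |f (κ * s) / f κ - Real.exp ((s - 1) * (κ * phiF f κ))|)
      =o[atTop] (fun κ => (κ * phiF f κ) ^ (-(ξ + 1)))

lemma MemF.mono' {f : ℝ → ℝ} (hf : MemF f) : Monotone f := by
  intro x y hxy
  rcases le_total y 0 with hy | hy
  · exact hf.monoNonpos (Set.mem_Iic.2 (by linarith)) (Set.mem_Iic.2 hy) hxy
  · rcases le_total x 0 with hx | hx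
    · calc f x ≤ f 0 := hf.monoNonpos (Set.mem_Iic.2 hx) (Set.mem_Iic.2 le_rfl) hx
        _ ≤ f y := hf.strictMonoNonneg.monotoneOn (Set.mem_Ici.2 le_rfl) (Set.mem_Ici.2 hy) hy
    · exact hf.strictMonoNonneg.monotoneOn (Set.mem_Ici.2 hx) (Set.mem_Ici.2 (le_trans hx hxy)) hxy

lemma f_weight_limit {f : ℝ → ℝ} (hf : MemF f) {ξ ζ : ℝ} (hξ : -1 < ξ) (hζ : -1 < ζ)
    {κ : ℕ → ℝ} (hκpos : ∀ n, 0 < κ n) (hκtop : Tendsto κ atTop atTop) :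
    Tendsto (fun n => (κ n * phiF f (κ n)) ^ (ξ+1) *
        ((∫ s in (-1:ℝ)..1, (1 - s) ^ ξ * (1 + s) ^ ζ * f (κ n * s)) / f (κ n)))
      atTop (nhds (2 ^ ζ * Real.Gamma (ξ+1))) := by
  set t : ℕ → ℝ := fun n => κ n * phiF f (κ n) with htdef
  have ht : Tendsto t atTop atTop := hf.tendsto_top.comp hκtop
  have hfm : Measurable f := hf.mono'.measurable
  have hwm := weight_measurable ξ ζ
  set A : ℕ → ℝ := fun n =>
    (∫ s in (-1:ℝ)..1, (1 - s) ^ ξ * (1 + s) ^ ζ * f (κ n * s)) / f (κ n) with hA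
  set B : ℕ → ℝ := fun n =>
    ∫ s in (-1:ℝ)..1, (1 - s) ^ ξ * (1 + s) ^ ζ * Real.exp ((s - 1) * t n) with hB
  set E : ℕ → ℝ := fun n =>
    ∫ s in (-1:ℝ)..1, (1 - s) ^ ξ * (1 + s) ^ ζ *
      |f (κ n * s) / f (κ n) - Real.exp ((s - 1) * t n)| with hEdef
  have hint_f : ∀ n, IntervalIntegrable
      (fun s => (1 - s) ^ ξ * (1 + s) ^ ζ * f (κ n * s)) volume (-1) 1 := by
    intro n
    refine ((weight_integrable hξ hζ).mul_const (f (κ n))).mono_fun'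
      (hwm.mul (hfm.comp (measurable_const_mul (κ n)))).aestronglyMeasurable ?_
    filter_upwards [ae_restrict_mem measurableSet_uIoc] with s hs
    rw [Set.uIoc_of_le (by norm_num : (-1:ℝ) ≤ 1)] at hs
    have h1 : -1 < s := hs.1
    have h2 : s ≤ 1 := hs.2
    have hw0 := weight_nonneg (ξ := ξ) (ζ := ζ) h1.le h2
    have hle : f (κ n * s) ≤ f (κ n) := by
      apply hf.mono'
      nlinarith [hκpos n]
    rw [Real.norm_eq_abs, abs_of_nonneg (mul_nonneg hw0 (hf.pos _).le)]
    exact mul_le_mul_of_nonneg_left hle hw0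
  have hint_e : ∀ n, IntervalIntegrable
      (fun s => (1 - s) ^ ξ * (1 + s) ^ ζ * Real.exp ((s - 1) * t n)) volume (-1) 1 := by
    intro n
    exact (weight_integrable hξ hζ).mul_continuousOn
      (Continuous.continuousOn (by continuity))
  have hAB : ∀ n, |A n - B n| ≤ E n := by
    intro n
    have e1 : A n = ∫ s in (-1:ℝ)..1,
        ((1 - s) ^ ξ * (1 + s) ^ ζ * f (κ n * s)) / f (κ n) := by
      rw [hA]; simp only
      rw [intervalIntegral.integral_div]
    have e2 : A n - B n = ∫ s in (-1:ℝ)..1,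
        (((1 - s) ^ ξ * (1 + s) ^ ζ * f (κ n * s)) / f (κ n) -
         (1 - s) ^ ξ * (1 + s) ^ ζ * Real.exp ((s - 1) * t n)) := by
      rw [e1, hB]
      exact (intervalIntegral.integral_sub ((hint_f n).div_const (f (κ n)))
        (hint_e n)).symm
    rw [e2]
    refine le_trans (intervalIntegral.abs_integral_le_integral_abs (by norm_num)) ?_
    rw [hEdef]
    apply le_of_eq
    refine intervalIntegral.integral_congr fun s hs => ?_
    rw [Set.uIcc_of_le (by norm_num : (-1:ℝ) ≤ 1)] at hs
    have hw0 := weight_nonneg (ξ := ξ) (ζ := ζ) hs.1 hs.2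
    rw [mul_div_assoc, ← mul_sub, abs_mul, abs_of_nonneg hw0]
  have hEo : Tendsto (fun n => t n ^ (ξ+1) * E n) atTop (nhds 0) := by
    have h1 := ((hf.littleO ξ ζ hξ hζ).comp_tendsto hκtop).tendsto_div_nhds_zero
    refine h1.congr' ?_
    filter_upwards [ht.eventually_gt_atTop 0] with n hn
    simp only [Function.comp]
    rw [Real.rpow_neg hn.le, div_eq_mul_inv, inv_inv]
    ring
  have hBlim : Tendsto (fun n => t n ^ (ξ+1) * B n) atTop
      (nhds (2 ^ ζ * Real.Gamma (ξ+1))) := exp_weight_limit hξ hζ ht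
  have hzero : Tendsto (fun n => t n ^ (ξ+1) * (A n - B n)) atTop (nhds 0) := by
    refine squeeze_zero_norm' ?_ hEo
    filter_upwards [ht.eventually_gt_atTop 0] with n hn
    have hE0 : 0 ≤ t n ^ (ξ+1) := Real.rpow_nonneg hn.le _
    rw [Real.norm_eq_abs, abs_mul, abs_of_nonneg hE0]
    exact mul_le_mul_of_nonneg_left (hAB n) hE0
  have := hBlim.add hzero
  rw [add_zero] at this
  refine this.congr fun n => ?_
  ring
/-- The normalizing integral `∫_{-1}^1 (1-s²)^{(p-3)/2} f(κ s) ds`. -/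
noncomputable def I0 (p : ℕ) (f : ℝ → ℝ) (κ : ℝ) : ℝ :=
  ∫ s in (-1:ℝ)..1, (1 - s ^ 2) ^ (((p:ℝ) - 3) / 2) * f (κ * s)

/-- The `ℓ`-th moment `e_ℓ(κ)` of the latitude cosine under `Rot_p(θ, κ, f)`. -/
noncomputable def eMom (p : ℕ) (f : ℝ → ℝ) (ℓ : ℕ) (κ : ℝ) : ℝ :=
  (∫ s in (-1:ℝ)..1, s ^ ℓ * (1 - s ^ 2) ^ (((p:ℝ) - 3) / 2) * f (κ * s)) / I0 p f κ

/-- The variance `ẽ₂(κ) = e₂(κ) - e₁(κ)²`. -/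
noncomputable def eTilde2 (p : ℕ) (f : ℝ → ℝ) (κ : ℝ) : ℝ :=
  eMom p f 2 κ - (eMom p f 1 κ) ^ 2

/-- The fourth moment `m₄(κ) = E[v⁴]` of `v = (1-u²)^{1/2}` under `Rot_p(θ, κ, f)`. -/
noncomputable def m4 (p : ℕ) (f : ℝ → ℝ) (κ : ℝ) : ℝ :=
  (∫ s in (-1:ℝ)..1, (1 - s ^ 2) ^ (((p:ℝ) + 1) / 2) * f (κ * s)) / I0 p f κ

/-- Theorem 2.2(iii): `m₄(κ_n) = (p²-1)/(κ_n φ_f(κ_n))² + o(1/(κ_n φ_f(κ_n))²)`. -/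
theorem m4_expansion
    (p : ℕ) (hp : 2 ≤ p) (f : ℝ → ℝ) (hf : MemF f)
    (κ : ℕ → ℝ) (hκpos : ∀ n, 0 < κ n) (hκtop : Tendsto κ atTop atTop) :
    Tendsto (fun n => (κ n * phiF f (κ n)) ^ 2 * m4 p f (κ n))
      atTop (nhds ((p:ℝ) ^ 2 - 1)) := by
  have hq : (2:ℝ) ≤ (p:ℝ) := by exact_mod_cast hp
  set a : ℝ := ((p:ℝ) + 1) / 2 with ha_def
  set b : ℝ := ((p:ℝ) - 3) / 2 with hb_def
  have ha : -1 < a := by rw [ha_def]; linarith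
  have hb : -1 < b := by rw [hb_def]; linarith
  have hb1 : (0:ℝ) < b + 1 := by rw [hb_def]; linarith
  have hb2 : (0:ℝ) < b + 2 := by linarith
  have hab : a = b + 2 := by rw [ha_def, hb_def]; ring
  have hconv : ∀ (c : ℝ) (κ0 : ℝ),
      (∫ s in (-1:ℝ)..1, (1 - s ^ 2) ^ c * f (κ0 * s)) =
        ∫ s in (-1:ℝ)..1, (1 - s) ^ c * (1 + s) ^ c * f (κ0 * s) := by
    intro c κ0
    refine intervalIntegral.integral_congr fun s hs => ?_
    rw [Set.uIcc_of_le (by norm_num : (-1:ℝ) ≤ 1)] at hs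
    have h1 : (0:ℝ) ≤ 1 - s := by linarith [hs.2]
    have h2 : (0:ℝ) ≤ 1 + s := by linarith [hs.1]
    rw [show (1:ℝ) - s ^ 2 = (1 - s) * (1 + s) by ring, Real.mul_rpow h1 h2]
  have hJ := f_weight_limit hf ha ha hκpos hκtop
  have hI := f_weight_limit hf hb hb hκpos hκtop
  have ht : Tendsto (fun n => κ n * phiF f (κ n)) atTop atTop :=
    hf.tendsto_top.comp hκtop
  have hLb_pos : (0:ℝ) < 2 ^ b * Real.Gamma (b + 1) :=
    mul_pos (Real.rpow_pos_of_pos two_pos b) (Real.Gamma_pos_of_pos hb1)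
  have hdiv := hJ.div hI hLb_pos.ne'
  have h2two : (2:ℝ) ^ (2:ℝ) = 4 := by
    rw [show (2:ℝ) = ((2:ℕ):ℝ) by norm_num]
    rw [Real.rpow_natCast]
    norm_num
  have hval : (2 ^ a * Real.Gamma (a + 1)) / (2 ^ b * Real.Gamma (b + 1)) =
      (p:ℝ) ^ 2 - 1 := by
    have g1 : Real.Gamma (a + 1) = (b + 2) * ((b + 1) * Real.Gamma (b + 1)) := by
      rw [show a + 1 = (b + 2) + 1 by rw [hab]]
      rw [Real.Gamma_add_one hb2.ne']
      rw [show b + 2 = (b + 1) + 1 by ring, Real.Gamma_add_one hb1.ne']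
    have g2 : (2:ℝ) ^ a = 2 ^ b * 4 := by
      rw [hab, Real.rpow_add two_pos, h2two]
    rw [g1, g2]
    have hΓ : Real.Gamma (b + 1) ≠ 0 := (Real.Gamma_pos_of_pos hb1).ne'
    have h2b : (2:ℝ) ^ b ≠ 0 := (Real.rpow_pos_of_pos two_pos b).ne'
    field_simp
    rw [hb_def]
    ring
  rw [hval] at hdiv
  refine hdiv.congr' ?_
  filter_upwards [ht.eventually_gt_atTop 0, hI.eventually (eventually_gt_nhds hLb_pos)]
    with n hn hIpos
  set T : ℝ := κ n * phiF f (κ n) with hT_def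
  have hfκ : (0:ℝ) < f (κ n) := hf.pos _
  have hTb : (0:ℝ) < T ^ (b + 1) := Real.rpow_pos_of_pos hn _
  have hIne : (∫ s in (-1:ℝ)..1, (1 - s) ^ b * (1 + s) ^ b * f (κ n * s)) ≠ 0 := by
    intro h0
    rw [h0] at hIpos
    simp at hIpos
  have hTa : T ^ (a + 1) = T ^ (b + 1) * T ^ 2 := by
    rw [show a + 1 = (b + 1) + 2 by rw [hab]; ring, Real.rpow_add hn,
      show ((2:ℝ)) = ((2:ℕ):ℝ) by norm_num, Real.rpow_natCast]
  show T ^ (a + 1) * ((∫ s in (-1:ℝ)..1, (1 - s) ^ a * (1 + s) ^ a * f (κ n * s)) / f (κ n)) /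
      (T ^ (b + 1) * ((∫ s in (-1:ℝ)..1, (1 - s) ^ b * (1 + s) ^ b * f (κ n * s)) / f (κ n))) =
      T ^ 2 * m4 p f (κ n)
  rw [m4, I0, hconv, hconv, hTa]
  rw [← ha_def, ← hb_def]
  generalize (∫ s in (-1:ℝ)..1, (1 - s) ^ a * (1 + s) ^ a * f (κ n * s)) = J
  generalize (∫ s in (-1:ℝ)..1, (1 - s) ^ b * (1 + s) ^ b * f (κ n * s)) = I at hIne ⊢
  field_simp
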